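/- For every even k ≥ 2, C₊,k ⊆ P_{X₊,ℓ_k}: no forbidden string of X₊ occurs in a concatenation of admissible blocks from B₊,k-1 alternating with constant blocks (+1)^{2ℓ_{k-1}-1}. Symmetrically, for every odd k ≥ 3, C₋,k ⊆ P_{X₋,ℓ_k}. -/

import Mathlib

/-!
Pad an admissible block `β` with the good letter `g` on both sides. A forbidden word of level
`k` (of the right parity, no longer than `β`) occurring in `⋯ g g β g g ⋯` can be slid to a
window of `β` covering all its letters other than `g`; that window has the same bad letters and
at least as many zeros, so it is forbidden as well, contradicting admissibility of `β`. Forbidden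
subwords of earlier levels are handled by induction on `k`. As `ℓ` is increasing and `k` has the
other parity, a forbidden word in an element of `C_k` is no longer than a block, so it lies in
some even block together with its two constant neighbours, that is, in a padded block.
-/

/-- The three-letter alphabet `Σ = {-1, 0, +1}`. -/
inductive Letter : Type
  | neg : Letter
  | zero : Letter
  | pos : Letter
deriving DecidableEq

instance instFintypeLetter : Fintype Letter :=
  ⟨{Letter.neg, Letter.zero, Letter.pos}, fun x => by cases x <;> simp⟩

/-- `f₀(ω)`: the frequency of the symbol `0` in the finite string `ω`. -/
noncomputable def f0 {n : ℕ} (ω : Fin n → Letter) : ℝ :=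
  ((Finset.univ.filter fun i => ω i = Letter.zero).card : ℝ) / n

/-- The binary entropy `H(t) = -t log t - (1-t) log (1-t)` (with `0 log 0 = 0`). -/
noncomputable def H (t : ℝ) : ℝ := -(t * Real.log t) - (1 - t) * Real.log (1 - t)

/-- `η` occurs as a consecutive substring of `ω` starting at position `s`. -/
def occursAt {p n : ℕ} (η : Fin p → Letter) (ω : Fin n → Letter) (s : ℕ) : Prop :=
  ∃ _h : s + p ≤ n, ∀ i : Fin p, η i = ω ⟨s + i.val, by have := i.isLt; omega⟩

/-- `η` occurs as a consecutive substring of `ω`. -/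
def occursIn {p n : ℕ} (η : Fin p → Letter) (ω : Fin n → Letter) : Prop :=
  ∃ s, occursAt η ω s

/-- The symbol forbidden at level `k`: `-1` for odd `k`, `+1` for even `k`. -/
def bad (k : ℕ) : Letter := if k % 2 = 1 then Letter.neg else Letter.pos

/-- The forbidden sets `F_k` of the construction of Section 4: strings of length `2ℓ_k - 1`
containing the bad symbol, or over the good alphabet with frequency of zeros `≥ r_k`,
or over the good alphabet containing a forbidden string of an earlier level of the same parity. -/
def Forb (ℓ : ℕ → ℕ) (r : ℕ → ℚ) (k : ℕ) : Set (Fin (2 * ℓ k - 1) → Letter) :=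
  {ω | ∃ i, ω i = bad k} ∪
    {ω | (∀ i, ω i ≠ bad k) ∧ (r k : ℝ) ≤ f0 ω} ∪
    {ω | (∀ i, ω i ≠ bad k) ∧
      ∃ k' : Fin k, 1 ≤ k'.val ∧ k'.val % 2 = k % 2 ∧
        ∃ η ∈ Forb ℓ r k'.val, occursIn η ω}
termination_by k
decreasing_by exact k'.isLt

open Classical in
/-- The locally admissible strings of length `2n-1`:  no string from `⋃_{k' ≡ parity, k' ≥ 1} F_{k'}`
occurs as a consecutive substring.  `parity = 1` corresponds to `X₊`, `parity = 0` to `X₋`. -/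
noncomputable def Padm (ℓ : ℕ → ℕ) (r : ℕ → ℚ) (parity : ℕ) (n : ℕ) :
    Finset (Fin (2 * n - 1) → Letter) :=
  Finset.univ.filter fun ω =>
    ∀ k, 1 ≤ k → k % 2 = parity → ∀ η ∈ Forb ℓ r k, ¬ occursIn η ω

/-- `m_k = (2ℓ_k - 1)/(2ℓ_{k-1} - 1)`. -/
def mblk (ℓ : ℕ → ℕ) (k : ℕ) : ℕ := (2 * ℓ k - 1) / (2 * ℓ (k - 1) - 1)

open Classical in
/-- Strings of length `N` which are concatenations of `m` blocks of length `L`,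
the blocks at the even positions (`0`-based) taken from `B` and the blocks at odd
positions equal to the constant block `g^L`. -/
noncomputable def CfromB {L : ℕ} (N m : ℕ) (g : Letter) (B : Finset (Fin L → Letter)) :
    Finset (Fin N → Letter) :=
  Finset.univ.filter fun ω => ∀ j < m,
    if j % 2 = 0 then ∃ η ∈ B, occursAt η ω (j * L)
    else occursAt (fun _ : Fin L => g) ω (j * L)

/-- `B₊,k = P_{X₊,ℓ_k} ∖ {(+1)^{2ℓ_k-1}}`. -/
noncomputable def Bplus (ℓ : ℕ → ℕ) (r : ℕ → ℚ) (k : ℕ) :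
    Finset (Fin (2 * ℓ k - 1) → Letter) :=
  Padm ℓ r 1 (ℓ k) \ {fun _ => Letter.pos}

/-- `B₋,k = P_{X₋,ℓ_k} ∖ {(-1)^{2ℓ_k-1}}`. -/
noncomputable def Bminus (ℓ : ℕ → ℕ) (r : ℕ → ℚ) (k : ℕ) :
    Finset (Fin (2 * ℓ k - 1) → Letter) :=
  Padm ℓ r 0 (ℓ k) \ {fun _ => Letter.neg}

/-- `C₊,k`: alternating concatenations of blocks from `B₊,k-1` and constant `+1` blocks. -/
noncomputable def Cplus (ℓ : ℕ → ℕ) (r : ℕ → ℚ) (k : ℕ) :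
    Finset (Fin (2 * ℓ k - 1) → Letter) :=
  CfromB (2 * ℓ k - 1) (mblk ℓ k) Letter.pos (Bplus ℓ r (k - 1))

/-- `C₋,k`: alternating concatenations of blocks from `B₋,k-1` and constant `-1` blocks. -/
noncomputable def Cminus (ℓ : ℕ → ℕ) (r : ℕ → ℚ) (k : ℕ) :
    Finset (Fin (2 * ℓ k - 1) → Letter) :=
  CfromB (2 * ℓ k - 1) (mblk ℓ k) Letter.neg (Bminus ℓ r (k - 1))

/-- The subshift `X_k ⊆ Σ^ℤ`: bi-infinite sequences in which no string of `F_k` occurs. -/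
def Xk (ℓ : ℕ → ℕ) (r : ℕ → ℚ) (k : ℕ) : Set (ℤ → Letter) :=
  {x | ∀ η ∈ Forb ℓ r k, ∀ j : ℤ, ¬ (∀ i : Fin (2 * ℓ k - 1), η i = x (j + (i.val : ℤ)))}

/-- `X₊ = ⋂_{m ≥ 1} X_{2m-1}`. -/
def Xplus (ℓ : ℕ → ℕ) (r : ℕ → ℚ) : Set (ℤ → Letter) :=
  {x | ∀ m, 1 ≤ m → x ∈ Xk ℓ r (2 * m - 1)}

/-- `X₋ = ⋂_{m ≥ 1} X_{2m}`. -/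
def Xminus (ℓ : ℕ → ℕ) (r : ℕ → ℚ) : Set (ℤ → Letter) :=
  {x | ∀ m, 1 ≤ m → x ∈ Xk ℓ r (2 * m)}


lemma bad_mod_two (k : ℕ) : bad k = bad (k % 2) := by
  simp [bad, Nat.mod_mod_of_dvd]

lemma mem_Forb {ℓ : ℕ → ℕ} {r : ℕ → ℚ} {k : ℕ} {ω : Fin (2 * ℓ k - 1) → Letter} :
    ω ∈ Forb ℓ r k ↔ (∃ i, ω i = bad k) ∨
      ((∀ i, ω i ≠ bad k) ∧ (r k : ℝ) ≤ f0 ω) ∨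
      ((∀ i, ω i ≠ bad k) ∧
        ∃ k' : Fin k, 1 ≤ k'.val ∧ k'.val % 2 = k % 2 ∧ ∃ η ∈ Forb ℓ r k'.val, occursIn η ω) := by
  rw [Forb]
  simp only [Set.mem_union, Set.mem_ofPred_eq, or_assoc]

lemma mem_Forb_of_le_f0 {ℓ : ℕ → ℕ} {r : ℕ → ℚ} {k : ℕ} {ω : Fin (2 * ℓ k - 1) → Letter}
    (h : (r k : ℝ) ≤ f0 ω) : ω ∈ Forb ℓ r k := by
  by_cases hbad : ∃ i, ω i = bad k
  · exact mem_Forb.2 (Or.inl hbad)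
  · exact mem_Forb.2 (Or.inr (Or.inl ⟨fun i hi => hbad ⟨i, hi⟩, h⟩))

lemma mem_Padm {ℓ : ℕ → ℕ} {r : ℕ → ℚ} {p n : ℕ} {ω : Fin (2 * n - 1) → Letter} :
    ω ∈ Padm ℓ r p n ↔ ∀ k, 1 ≤ k → k % 2 = p → ∀ η ∈ Forb ℓ r k, ¬ occursIn η ω := by
  simp [Padm]

lemma occursAt.apply {p n s : ℕ} {η : Fin p → Letter} {ω : Fin n → Letter}
    (hocc : occursAt η ω s) (x : Fin n) (h₁ : s ≤ x) (h₂ : x < s + p) :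
    ω x = η ⟨x - s, by omega⟩ := by
  obtain ⟨_, hocc⟩ := hocc
  rw [hocc ⟨x - s, by omega⟩]
  congr 1
  ext
  simp only
  omega

lemma f0_window_le_of_zero_mem {x : ℤ → Letter} {q : ℕ} {t s : ℤ}
    (h : ∀ i : Fin q, x (t + i.val) = .zero → s ≤ t + i.val ∧ t + i.val < s + q) :
    f0 (fun i : Fin q => x (t + i.val)) ≤ f0 (fun i : Fin q => x (s + i.val)) := by
  refine div_le_div_of_nonneg_right ?_ (Nat.cast_nonneg _)
  refine Nat.cast_le.2 (Finset.card_le_card_of_injOn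
    (fun i : Fin q => (⟨(t + i.val - s).toNat % q, Nat.mod_lt _ i.pos⟩ : Fin q)) ?_ ?_)
  · intro i hi
    simp only [Finset.coe_filter, Finset.mem_univ, true_and, Set.mem_ofPred_eq] at hi ⊢
    obtain ⟨h₁, h₂⟩ := h i hi
    rw [Nat.mod_eq_of_lt (by omega)]
    convert hi using 2
    omega
  · intro i hi j hj hij
    simp only [Finset.coe_filter, Finset.mem_univ, true_and, Set.mem_ofPred_eq] at hi hj
    have := h i hi
    have := h j hj
    have := congrArg Fin.val hij
    simp only at this
    rw [Nat.mod_eq_of_lt (by omega), Nat.mod_eq_of_lt (by omega)] at this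
    ext
    omega

lemma exists_window_cover {M q : ℕ} (hq : q ≤ M) (t : ℤ) :
    ∃ s : ℕ, s + q ≤ M ∧ ∀ y : ℤ, t ≤ y → y < t + q → 0 ≤ y → y < M → s ≤ y ∧ y < s + q :=
  ⟨min t.toNat (M - q), by omega, fun _ _ _ _ _ => by omega⟩

def padConst {M : ℕ} (g : Letter) (β : Fin M → Letter) (y : ℤ) : Letter :=
  if h : 0 ≤ y ∧ y < M then β ⟨y.toNat, by omega⟩ else g

lemma padConst_natCast {M : ℕ} (g : Letter) (β : Fin M → Letter) (x : Fin M) :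
    padConst g β (x.val : ℤ) = β x := by
  simp [padConst]

lemma padConst_of_not_mem {M : ℕ} (g : Letter) (β : Fin M → Letter) {y : ℤ}
    (h : ¬ (0 ≤ y ∧ y < M)) : padConst g β y = g :=
  dif_neg h

lemma mem_of_padConst_ne {M : ℕ} {g : Letter} {β : Fin M → Letter} {y : ℤ}
    (h : padConst g β y ≠ g) : 0 ≤ y ∧ y < M :=
  not_not.1 (mt (padConst_of_not_mem g β) h)

theorem padConst_mem_Xk {ℓ : ℕ → ℕ} {r : ℕ → ℚ} {p n : ℕ} {β : Fin (2 * n - 1) → Letter}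
    (hβ : β ∈ Padm ℓ r p n) {g : Letter} (hg0 : g ≠ .zero) (hgbad : g ≠ bad p) :
    ∀ k, 1 ≤ k → k % 2 = p → 2 * ℓ k - 1 ≤ 2 * n - 1 → padConst g β ∈ Xk ℓ r k := by
  intro k
  induction k using Nat.strong_induction_on with
  | _ k ih =>
  intro hk hkp hq η hη t hocc
  obtain ⟨s, hs, hcover⟩ := exists_window_cover hq t
  set θ : Fin (2 * ℓ k - 1) → Letter := fun i => β ⟨s + i, by omega⟩
  have hθ : θ ∉ Forb ℓ r k := fun h => mem_Padm.1 hβ k hk hkp θ h ⟨s, hs, fun _ => rfl⟩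
  have hθpad : θ = fun i => padConst g β ((s : ℤ) + i.val) := by
    funext i
    exact (padConst_natCast g β ⟨s + i, by omega⟩).symm.trans (by push_cast; rfl)
  have hcov : ∀ i : Fin (2 * ℓ k - 1), η i ≠ g →
      s ≤ t + i.val ∧ t + i.val < s + ((2 * ℓ k - 1 : ℕ) : ℤ) :=
    fun i hi => hcover _ (by omega) (by omega) (mem_of_padConst_ne (hocc i ▸ hi)).1
      (by exact_mod_cast (mem_of_padConst_ne (hocc i ▸ hi)).2)
  rcases mem_Forb.1 hη with ⟨i, hi⟩ | ⟨-, hf⟩ | ⟨-, k', hk', hk'p, η', hη', t', ht', hocc'⟩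
  · have hig : η i ≠ g := by rw [hi, bad_mod_two, hkp]; exact hgbad.symm
    obtain ⟨h₁, h₂⟩ := hcov i hig
    refine hθ (mem_Forb.2 (Or.inl ⟨⟨(t + i.val - s).toNat, by omega⟩, ?_⟩))
    rw [hθpad, ← hi, hocc i]
    exact congrArg (padConst g β) (by simp only; omega)
  · refine hθ (mem_Forb_of_le_f0 (hf.trans ?_))
    rw [hθpad, show η = _ from funext hocc]
    exact f0_window_le_of_zero_mem fun i hi =>
      hcov i (by rw [hocc i, hi]; exact hg0.symm)
  · refine ih k' k'.isLt hk' (hk'p.trans hkp) (by omega) η' hη' (t + t') fun i => ?_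
    rw [hocc' i, hocc ⟨t' + i, by omega⟩]
    congr 1
    push_cast
    ring

section CfromB

variable {L N m : ℕ} {g : Letter} {B : Finset (Fin L → Letter)} {ω : Fin N → Letter}

open Classical in
lemma mem_CfromB : ω ∈ CfromB N m g B ↔ ∀ j < m,
    if j % 2 = 0 then ∃ η ∈ B, occursAt η ω (j * L)
    else occursAt (fun _ : Fin L => g) ω (j * L) := by
  simp [CfromB]

lemma eq_of_mem_CfromB_of_odd (hω : ω ∈ CfromB N m g B) {j : ℕ} (hj : j < m)
    (hjodd : j % 2 = 1) (x : Fin N) (h₁ : j * L ≤ x) (h₂ : x < j * L + L) : ω x = g := by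
  have hblock := mem_CfromB.1 hω j hj
  rw [if_neg (by omega)] at hblock
  exact hblock.apply x h₁ h₂

lemma exists_eq_padConst_of_mem_CfromB (hω : ω ∈ CfromB N m g B) (hmN : m * L = N) {b : ℕ}
    (hb : b < m) (hbeven : b % 2 = 0) :
    ∃ β ∈ B, ∀ x : Fin N, b * L ≤ x + L → x < b * L + 2 * L →
      ω x = padConst g β ((x.val : ℤ) - (b * L : ℕ)) := by
  have hblock := mem_CfromB.1 hω b hb
  rw [if_pos hbeven] at hblock
  obtain ⟨β, hβB, hβ⟩ := hblock
  refine ⟨β, hβB, fun x h₁ h₂ => ?_⟩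
  rcases lt_or_ge x.val (b * L) with hlt | hge
  · have hb1 : 1 ≤ b := Nat.pos_of_ne_zero (by rintro rfl; simp at hlt)
    have hbL : (b - 1) * L + L = b * L := by rw [← add_one_mul, Nat.sub_add_cancel hb1]
    rw [eq_of_mem_CfromB_of_odd hω (j := b - 1) (by omega) (by omega) x (by omega) (by omega),
      padConst_of_not_mem g β (by push_cast; omega)]
  · rcases lt_or_ge x.val (b * L + L) with hlt | hge'
    · rw [hβ.apply x hge hlt, ← padConst_natCast g β]
      congr 1
      simp only
      omega
    · have hb1 : b + 1 < m := by
        refine Nat.lt_of_mul_lt_mul_right (a := L) ?_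
        rw [add_one_mul, hmN]
        omega
      rw [eq_of_mem_CfromB_of_odd hω hb1 (by omega) x (by rw [add_one_mul]; omega)
          (by rw [add_one_mul]; omega),
        padConst_of_not_mem g β (by push_cast; omega)]

end CfromB

lemma exists_even_block_near {L m q s : ℕ} (hm : Odd m) (hqL : q ≤ L) (hs : s + q ≤ m * L) :
    ∃ b < m, b % 2 = 0 ∧ b * L ≤ s + L ∧ s + q ≤ b * L + 2 * L := by
  rcases eq_or_lt_of_le (le_of_add_le_left hs) with hsm | hsm
  · -- an empty window may start at the very end, past the last block
    obtain ⟨c, rfl⟩ := hm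
    refine ⟨2 * c, by omega, by omega, ?_, ?_⟩ <;> rw [add_one_mul] at hsm hs <;> omega
  have hL : 0 < L := Nat.pos_of_ne_zero (by rintro rfl; simp at hsm)
  have hjm : s / L < m := (Nat.div_lt_iff_lt_mul hL).2 (by omega)
  have hsj := Nat.div_add_mod s L
  have hmod := Nat.mod_lt s hL
  rw [mul_comm] at hsj
  rcases Nat.even_or_odd (s / L) with heven | hodd
  · exact ⟨s / L, hjm, Nat.even_iff.1 heven, by omega, by omega⟩
  · have hjm' : s / L + 1 < m := by
      rcases hm with ⟨c, rfl⟩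
      rcases hodd with ⟨d, hd⟩
      omega
    exact ⟨s / L + 1, hjm', by rw [Nat.odd_iff] at hodd; omega, by rw [add_one_mul]; omega,
      by rw [add_one_mul]; omega⟩

theorem CfromB_subset_Padm {ℓ : ℕ → ℕ} {r : ℕ → ℚ} {p n n' m : ℕ} {g : Letter}
    (hg0 : g ≠ .zero) (hgbad : g ≠ bad p) {B : Finset (Fin (2 * n - 1) → Letter)}
    (hB : B ⊆ Padm ℓ r p n) (hm : Odd m) (hmN : m * (2 * n - 1) = 2 * n' - 1)
    (hlen : ∀ k, 1 ≤ k → k % 2 = p → 2 * ℓ k - 1 ≤ 2 * n' - 1 → 2 * ℓ k - 1 ≤ 2 * n - 1) :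
    CfromB (2 * n' - 1) m g B ⊆ Padm ℓ r p n' := by
  intro ω hω
  refine mem_Padm.2 fun k hk hkp η hη ⟨s, hsq, hocc⟩ => ?_
  have hqL := hlen k hk hkp (by omega)
  obtain ⟨b, hb, hbeven, h₁, h₂⟩ := exists_even_block_near hm hqL (hmN ▸ hsq)
  obtain ⟨β, hβB, hβ⟩ := exists_eq_padConst_of_mem_CfromB hω hmN hb hbeven
  refine padConst_mem_Xk (hB hβB) hg0 hgbad k hk hkp hqL η hη ((s : ℤ) - (b * (2 * n - 1) : ℕ))
    fun i => ?_
  rw [hocc i, hβ _ (by simp only; omega) (by simp only; omega)]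
  congr 1
  simp only
  omega

theorem CfromB_mblk_subset_Padm {ℓ : ℕ → ℕ} {r : ℕ → ℚ} (hℓ : StrictMonoOn ℓ (Set.Ici 1))
    {k p : ℕ} (hk : 2 ≤ k) (hkp : k % 2 ≠ p) (hdvd : 2 * ℓ (k - 1) - 1 ∣ 2 * ℓ k - 1)
    {g : Letter} (hg0 : g ≠ .zero) (hgbad : g ≠ bad p)
    {B : Finset (Fin (2 * ℓ (k - 1) - 1) → Letter)} (hB : B ⊆ Padm ℓ r p (ℓ (k - 1))) :
    CfromB (2 * ℓ k - 1) (mblk ℓ k) g B ⊆ Padm ℓ r p (ℓ k) := by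
  have hℓk : ℓ (k - 1) < ℓ k :=
    hℓ (Set.mem_Ici.2 (by omega)) (Set.mem_Ici.2 (by omega)) (by omega)
  have hmN : mblk ℓ k * (2 * ℓ (k - 1) - 1) = 2 * ℓ k - 1 := Nat.div_mul_cancel hdvd
  have hodd : Odd (2 * ℓ k - 1) := ⟨ℓ k - 1, by omega⟩
  refine CfromB_subset_Padm hg0 hgbad hB (Nat.Odd.of_mul_left (hmN ▸ hodd)) hmN
    fun k' hk' hk'p hlen => ?_
  rcases lt_or_gt_of_ne (show k' ≠ k by omega) with hlt | hgt
  · have := hℓ.monotoneOn (Set.mem_Ici.2 hk') (Set.mem_Ici.2 (by omega)) (by omega : k' ≤ k - 1)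
    omega
  · have := hℓ (Set.mem_Ici.2 (by omega)) (Set.mem_Ici.2 hk') hgt
    omega

theorem C_subset_admissible_general (ℓ : ℕ → ℕ) (r : ℕ → ℚ)
    (hlmono : ∀ k, 1 ≤ k → ℓ k < ℓ (k + 1))
    (hdvd : ∀ k, 2 ≤ k → (2 * ℓ (k - 1) - 1) ∣ (2 * ℓ k - 1)) :
    (∀ k, 2 ≤ k → k % 2 = 0 → Cplus ℓ r k ⊆ Padm ℓ r 1 (ℓ k)) ∧
    (∀ k, 3 ≤ k → k % 2 = 1 → Cminus ℓ r k ⊆ Padm ℓ r 0 (ℓ k)) := by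
  have hℓ : StrictMonoOn ℓ (Set.Ici 1) :=
    strictMonoOn_of_lt_add_one Set.ordConnected_Ici fun k _ hk _ => hlmono k hk
  exact ⟨fun k hk hk0 => CfromB_mblk_subset_Padm hℓ hk (by omega) (hdvd k hk) (by decide)
      (by decide) Finset.sdiff_subset,
    fun k hk hk1 => CfromB_mblk_subset_Padm hℓ (by omega) (by omega) (hdvd k (by omega))
      (by decide) (by decide) Finset.sdiff_subset⟩

theorem C_subset_admissible (ℓ : ℕ → ℕ) (r : ℕ → ℚ)
    (hl1 : ℓ 1 = 4) (hlmono : ∀ k, 1 ≤ k → ℓ k < ℓ (k + 1))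
    (hr1 : r 1 = 1 / 2) (hrpos : ∀ k, 1 ≤ k → 0 < r k) (hrhalf : ∀ k, 1 ≤ k → r k ≤ 1 / 2)
    (hdvd : ∀ k, 2 ≤ k → (2 * ℓ (k - 1) - 1) ∣ (2 * ℓ k - 1))
    (hS1 : ∀ k, 1 ≤ k → 1 < ((2 * ℓ k - 1 : ℕ) : ℝ) * (r k : ℝ))
    (hS2 : ∀ k, 1 ≤ k → 10 * H ((r (k + 1) : ℝ)) ≤ 1 / 2 * (r k : ℝ) * Real.log 2)
    (hS3 : ∀ k, 1 ≤ k →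
      10 * ((r (k + 1) : ℝ) + 2 * (((2 * ℓ (k + 1) - 1 : ℕ) : ℝ))⁻¹ ^ 2 *
        Real.log ((2 * ℓ (k + 1) - 1 : ℕ) : ℝ)) ≤ ((4 * ℓ k - 2 : ℕ) : ℝ)⁻¹)
    (hS4 : ∀ k, 1 ≤ k → 2 ^ (4 * ℓ k) ≤ ℓ (k + 1)) :
    (∀ k, 2 ≤ k → k % 2 = 0 → Cplus ℓ r k ⊆ Padm ℓ r 1 (ℓ k)) ∧
    (∀ k, 3 ≤ k → k % 2 = 1 → Cminus ℓ r k ⊆ Padm ℓ r 0 (ℓ k)) :=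
  C_subset_admissible_general ℓ r hlmono hdvd
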